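/- arXiv:1706.08167 — 2 statements merged into one kernel-verified Lean document; each statement's English description precedes it below -/
import Mathlib

section
/- Let A ∈ C^{m×n} with m ≥ n have i.i.d. standard complex Gaussian CN(0,1) entries, and let G ∈ C^{n×n} have i.i.d. CN(0,1) entries. Then for every s > 0, Pr( σ_min(A) ≤ s ) ≤ [ Pr( σ_min(G) ≤ s ) ]^{⌊m/n⌋}, where σ_min denotes the smallest singular value. -/
open MeasureTheory ProbabilityTheory Real

noncomputable section

/-- The standard complex Gaussian distribution `CN(0,1)` on `ℂ`:
`a = u + i v` with `u, v` independent real `N(0, 1/2)`. -/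
def cgauss : Measure ℂ :=
  Measure.map (fun p : ℝ × ℝ => (p.1 : ℂ) + p.2 * Complex.I)
    ((gaussianReal 0 (1/2)).prod (gaussianReal 0 (1/2)))

instance (n : ℕ) : MeasurableSpace (EuclideanSpace ℂ (Fin n)) :=
  MeasurableSpace.comap WithLp.ofLp MeasurableSpace.pi
instance (n : ℕ) : BorelSpace (EuclideanSpace ℂ (Fin n)) := PiLp.borelSpace 2

/-- The law of an `m × n` random matrix with i.i.d. `CN(0,1)` entries. -/
def matGauss (m n : ℕ) : Measure (Fin m → Fin n → ℂ) :=
  Measure.pi fun _ : Fin m => Measure.pi fun _ : Fin n => cgauss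

/-- The smallest singular value `σ_min(M) = min_{‖x‖ = 1} ‖M x‖` of an `m × n` complex
matrix. -/
def smin (m n : ℕ) (M : Fin m → Fin n → ℂ) : ℝ :=
  ⨅ x : Metric.sphere (0 : EuclideanSpace ℂ (Fin n)) 1,
    ‖(WithLp.equiv 2 (Fin m → ℂ)).symm
      ((Matrix.of M).mulVec (WithLp.equiv 2 (Fin n → ℂ) x.1))‖

end

/-!
Deleting rows of a matrix can only decrease `σ_min`, so if `σ_min(A) ≤ s` then the top `n × n`
block and the remaining rows both have `σ_min ≤ s`. These two blocks are independent, which gives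
`Pr(σ_min(A_{n+r}) ≤ s) ≤ Pr(σ_min(G) ≤ s) · Pr(σ_min(A_r) ≤ s)`; iterating peels off `⌊m/n⌋`
square blocks.
-/

open Finset in
theorem EuclideanSpace.norm_comp_le_of_injective {𝕜 ι κ : Type*} [RCLike 𝕜] [Fintype ι]
    [Fintype κ] {e : κ → ι} (he : Function.Injective e) (v : ι → 𝕜) :
    ‖(WithLp.equiv 2 (κ → 𝕜)).symm (v ∘ e)‖ ≤ ‖(WithLp.equiv 2 (ι → 𝕜)).symm v‖ := by
  rw [EuclideanSpace.norm_eq, EuclideanSpace.norm_eq]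
  gcongr
  calc ∑ i, ‖v (e i)‖ ^ 2 = ∑ j ∈ univ.map ⟨e, he⟩, ‖v j‖ ^ 2 :=
        (sum_map univ ⟨e, he⟩ fun j => ‖v j‖ ^ 2).symm
    _ ≤ ∑ j, ‖v j‖ ^ 2 := sum_le_univ_sum_of_nonneg fun _ => by positivity

theorem smin_comp_le_of_injective {k m n : ℕ} {e : Fin k → Fin m} (he : Function.Injective e)
    (A : Fin m → Fin n → ℂ) : smin k n (fun i => A (e i)) ≤ smin m n A := by
  refine ciInf_mono ⟨0, by rintro _ ⟨x, rfl⟩; positivity⟩ fun x => ?_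
  exact EuclideanSpace.norm_comp_le_of_injective he
    ((Matrix.of A).mulVec (WithLp.equiv 2 (Fin n → ℂ) x.1))

theorem MeasureTheory.Measure.pi_castAdd_mem_and_natAdd_mem {α : Type*} [MeasurableSpace α]
    (μ : Measure α) [SigmaFinite μ] (n r : ℕ) (S : Set (Fin n → α)) (T : Set (Fin r → α)) :
    Measure.pi (fun _ : Fin (n + r) => μ)
        {x | (fun i => x (Fin.castAdd r i)) ∈ S ∧ (fun j => x (Fin.natAdd n j)) ∈ T}
      = Measure.pi (fun _ => μ) S * Measure.pi (fun _ => μ) T := by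
  let e := (MeasurableEquiv.piCongrLeft (fun _ => α) (finSumFinEquiv (m := n) (n := r))).symm.trans
    (MeasurableEquiv.sumPiEquivProdPi fun _ => α)
  have he : MeasurePreserving e (Measure.pi fun _ => μ)
      ((Measure.pi fun _ => μ).prod (Measure.pi fun _ => μ)) :=
    (measurePreserving_sumPiEquivProdPi _).comp
      (measurePreserving_piCongrLeft (fun _ => μ) finSumFinEquiv).symm
  have hset : {x : Fin (n + r) → α |
      (fun i => x (Fin.castAdd r i)) ∈ S ∧ (fun j => x (Fin.natAdd n j)) ∈ T} = e ⁻¹' S ×ˢ T := by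
    ext x
    simp [e, MeasurableEquiv.sumPiEquivProdPi, MeasurableEquiv.piCongrLeft]
  rw [hset, he.measure_preimage_equiv, Measure.prod_prod]

instance isProbabilityMeasure_cgauss : IsProbabilityMeasure cgauss :=
  Measure.isProbabilityMeasure_map (by fun_prop)

instance isProbabilityMeasure_matGauss (m n : ℕ) : IsProbabilityMeasure (matGauss m n) := by
  unfold matGauss; infer_instance

theorem matGauss_smin_le_add_le_mul (n r k : ℕ) (s : ℝ) :
    matGauss (n + r) k {A | smin (n + r) k A ≤ s}
      ≤ matGauss n k {B | smin n k B ≤ s} * matGauss r k {B | smin r k B ≤ s} := by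
  refine (measure_mono fun A (hA : smin (n + r) k A ≤ s) => ?_).trans_eq
    (Measure.pi_castAdd_mem_and_natAdd_mem _ n r {B | smin n k B ≤ s} {B | smin r k B ≤ s})
  exact ⟨(smin_comp_le_of_injective (Fin.castAdd_injective n r) A).trans hA,
    (smin_comp_le_of_injective (Fin.natAdd_injective r n) A).trans hA⟩

theorem smin_tail_power_bound_general (m n : ℕ) (s : ℝ) :
    matGauss m n {A | smin m n A ≤ s} ≤ (matGauss n n {G | smin n n G ≤ s}) ^ (m / n) := by
  obtain rfl | hn := n.eq_zero_or_pos
  · simpa using prob_le_one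
  induction m using Nat.strong_induction_on with
  | _ m ih =>
    obtain hlt | hle := lt_or_ge m n
    · simpa [Nat.div_eq_of_lt hlt] using prob_le_one
    obtain ⟨r, rfl⟩ := Nat.exists_eq_add_of_le hle
    calc
      _ ≤ matGauss n n {G | smin n n G ≤ s} * matGauss r n {B | smin r n B ≤ s} :=
        matGauss_smin_le_add_le_mul n r n s
      _ ≤ matGauss n n {G | smin n n G ≤ s} * matGauss n n {G | smin n n G ≤ s} ^ (r / n) := by
        gcongr; exact ih r (by omega)
      _ = _ := by rw [add_comm, Nat.add_div_right r hn, pow_succ']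

/-- if `A ∈ ℂ^{m×n}` (`m ≥ n`) has i.i.d. `CN(0,1)` entries and `G ∈ ℂ^{n×n}` has
i.i.d. `CN(0,1)` entries, then for every `s > 0`,
`Pr(σ_min(A) ≤ s) ≤ [Pr(σ_min(G) ≤ s)]^⌊m/n⌋`. -/
theorem smin_tail_power_bound (m n : ℕ) (hmn : n ≤ m) (s : ℝ) (hs : 0 < s) :
    matGauss m n {A | smin m n A ≤ s} ≤ (matGauss n n {G | smin n n G ≤ s}) ^ (m / n) :=
  smin_tail_power_bound_general m n s
end

section
/- Let b1, b2 be independent real standard Gaussian N(0,1) random variables. Then for every θ ∈ [0, π/2], E[ |b1| · |b1·sin θ + b2·cos θ| ] = (2/π)·(θ·sin θ + cos θ). -/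
/-!
In polar coordinates the standard Gaussian on `ℝ²` is `(2π)⁻¹ e^{-r²/2} r dr dφ`. The integrand is
homogeneous of degree 2, so the radial integral `∫₀^∞ r³ e^{-r²/2} dr = 2` splits
off and leaves `π⁻¹ ∫_{-π}^{π} |cos φ sin (φ + θ)| dφ`. This integrand has period `π`; on
`[-π/2, π/2]` it changes sign only at `-θ`, and `2 cos φ sin (φ + θ) = sin θ + sin (2φ + θ)` has an
explicit primitive.
-/

open MeasureTheory ProbabilityTheory Real Set

theorem integral_Ioi_pow_three_mul_exp_neg_sq_div_two :
    ∫ r in Ioi (0 : ℝ), r ^ 3 * exp (-r ^ 2 / 2) = 2 := by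
  have h := integral_rpow_mul_exp_neg_mul_rpow (p := 2) (q := 3) (b := 1 / 2) two_pos
    (by norm_num) (by norm_num)
  norm_num [rpow_ofNat, Gamma_two] at h
  convert h using 3 with r
  ring_nf

theorem integral_gaussianReal_prod_eq_integral_smul {E : Type*} [NormedAddCommGroup E]
    [NormedSpace ℝ E] (f : ℝ × ℝ → E) :
    ∫ p, f p ∂(gaussianReal 0 1).prod (gaussianReal 0 1)
      = ∫ p : ℝ × ℝ, ((2 * π)⁻¹ * exp (-(p.1 ^ 2 + p.2 ^ 2) / 2)) • f p := by
  rw [gaussianReal_of_var_ne_zero 0 one_ne_zero,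
    prod_withDensity (measurable_gaussianPDF 0 1) (measurable_gaussianPDF 0 1),
    integral_withDensity_eq_integral_toReal_smul (by fun_prop)
      (ae_of_all _ fun _ ↦ ENNReal.mul_lt_top gaussianPDF_lt_top gaussianPDF_lt_top),
    ← Measure.volume_eq_prod]
  congr with p
  rw [ENNReal.toReal_mul, toReal_gaussianPDF, toReal_gaussianPDF, gaussianPDFReal,
    gaussianPDFReal]
  have hsqrt : (√(2 * π))⁻¹ * (√(2 * π))⁻¹ = (2 * π)⁻¹ := by
    rw [← mul_inv, mul_self_sqrt (by positivity)]
  have hexp : rexp (-p.1 ^ 2 / 2) * rexp (-p.2 ^ 2 / 2) = rexp (-(p.1 ^ 2 + p.2 ^ 2) / 2) := by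
    rw [← exp_add]; ring_nf
  simp only [NNReal.coe_one, mul_one, sub_zero]
  rw [← hsqrt, ← hexp]; ring_nf

theorem integral_gaussianReal_prod_eq_of_homogeneous {f : ℝ × ℝ → ℝ}
    (hf : ∀ r : ℝ, 0 < r → ∀ p, f (r • p) = r ^ 2 * f p) :
    ∫ p, f p ∂(gaussianReal 0 1).prod (gaussianReal 0 1)
      = π⁻¹ * ∫ φ in -π..π, f (cos φ, sin φ) := by
  rw [integral_gaussianReal_prod_eq_integral_smul, ← integral_comp_polarCoord_symm,
    polarCoord_target]
  calc
    _ = ∫ p in Ioi (0 : ℝ) ×ˢ Ioo (-π) π,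
          ((2 * π)⁻¹ * (p.1 ^ 3 * exp (-p.1 ^ 2 / 2))) * f (cos p.2, sin p.2) := by
      refine setIntegral_congr_fun (measurableSet_Ioi.prod measurableSet_Ioo) ?_
      rintro ⟨r, φ⟩ ⟨hr, -⟩
      have hpolar : polarCoord.symm (r, φ) = r • (cos φ, sin φ) := by
        simp [polarCoord_symm_apply]
      have hnorm : (r * cos φ) ^ 2 + (r * sin φ) ^ 2 = r ^ 2 := by
        linear_combination r ^ 2 * cos_sq_add_sin_sq φ
      simp only [hpolar, hf r hr, Prod.smul_fst, Prod.smul_snd, smul_eq_mul, hnorm]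
      ring
    _ = π⁻¹ * ∫ φ in -π..π, f (cos φ, sin φ) := by
      rw [Measure.volume_eq_prod,
        setIntegral_prod_mul (fun r ↦ (2 * π)⁻¹ * (r ^ 3 * exp (-r ^ 2 / 2)))
          (fun φ ↦ f (cos φ, sin φ)), integral_const_mul,
        integral_Ioi_pow_three_mul_exp_neg_sq_div_two, intervalIntegral.integral_of_le
          (by linarith [pi_pos]), integral_Ioc_eq_integral_Ioo]
      field_simp

theorem intervalIntegral.integral_abs_eq_sub_of_hasDerivAt_of_nonneg {f F : ℝ → ℝ} {a b : ℝ}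
    (hab : a ≤ b) (hF : ∀ x ∈ uIcc a b, HasDerivAt F (f x) x)
    (hf : IntervalIntegrable f volume a b) (hnonneg : ∀ x ∈ Icc a b, 0 ≤ f x) :
    ∫ x in a..b, |f x| = F b - F a := by
  rw [intervalIntegral.integral_congr (g := f) fun x hx ↦
    abs_of_nonneg (hnonneg x (uIcc_of_le hab ▸ hx))]
  exact intervalIntegral.integral_eq_sub_of_hasDerivAt hF hf

theorem hasDerivAt_cos_mul_sin_add_primitive (θ φ : ℝ) :
    HasDerivAt (fun x ↦ (x * sin θ - cos (2 * x + θ) / 2) / 2) (cos φ * sin (φ + θ)) φ := by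
  have product_to_sum : 2 * sin (φ + θ) * cos φ = sin θ + sin (2 * φ + θ) := by
    rw [two_mul_sin_mul_cos, add_sub_cancel_left, show φ + θ + φ = 2 * φ + θ by ring]
  refine ((((hasDerivAt_id φ).mul_const (sin θ)).sub
    ((((hasDerivAt_id φ).const_mul 2).add_const θ).cos.div_const 2)).div_const 2).congr_deriv ?_
  simp only [id]
  linear_combination (-1 / 2 : ℝ) * product_to_sum

theorem integral_abs_cos_mul_sin_add {θ : ℝ} (h0 : 0 ≤ θ) (h1 : θ ≤ π / 2) :
    ∫ φ in -π..π, |cos φ * sin (φ + θ)| = 2 * (θ * sin θ + cos θ) := by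
  set F : ℝ → ℝ := fun φ ↦ (φ * sin θ - cos (2 * φ + θ) / 2) / 2
  have hF (φ : ℝ) : HasDerivAt F (cos φ * sin (φ + θ)) φ :=
    hasDerivAt_cos_mul_sin_add_primitive θ φ
  have hcont : Continuous fun φ ↦ cos φ * sin (φ + θ) := by fun_prop
  have hint (a b : ℝ) : IntervalIntegrable (fun φ ↦ |cos φ * sin (φ + θ)|) volume a b :=
    hcont.abs.intervalIntegrable a b
  have hper : Function.Periodic (fun φ ↦ |cos φ * sin (φ + θ)|) π := fun φ ↦ by
    simp only [add_right_comm φ π θ, cos_add_pi, sin_add_pi, neg_mul_neg]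
  have hneg : ∫ φ in -(π / 2)..-θ, |cos φ * sin (φ + θ)| = F (-(π / 2)) - F (-θ) := by
    have := intervalIntegral.integral_abs_eq_sub_of_hasDerivAt_of_nonneg (F := -F)
      (f := fun φ ↦ -(cos φ * sin (φ + θ))) (a := -(π / 2)) (b := -θ) (by linarith)
      (fun φ _ ↦ (hF φ).neg) (hcont.neg.intervalIntegrable _ _) fun φ ⟨ha, hb⟩ ↦ by
        have : 0 ≤ cos φ := cos_nonneg_of_neg_pi_div_two_le_of_le ha (by linarith)
        have : sin (φ + θ) ≤ 0 := sin_nonpos_of_nonpos_of_neg_pi_le (by linarith) (by linarith)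
        nlinarith
    simpa [abs_neg, sub_eq_add_neg, add_comm] using this
  have hpos : ∫ φ in -θ..π / 2, |cos φ * sin (φ + θ)| = F (π / 2) - F (-θ) :=
    intervalIntegral.integral_abs_eq_sub_of_hasDerivAt_of_nonneg (by linarith) (fun φ _ ↦ hF φ)
      (hcont.intervalIntegrable _ _) fun φ ⟨ha, hb⟩ ↦ mul_nonneg
        (cos_nonneg_of_neg_pi_div_two_le_of_le (by linarith) hb)
        (sin_nonneg_of_nonneg_of_le_pi (by linarith) (by linarith))
  have half_period : ∫ φ in -(π / 2)..π / 2, |cos φ * sin (φ + θ)| = θ * sin θ + cos θ := by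
    rw [← intervalIntegral.integral_add_adjacent_intervals (hint _ (-θ)) (hint _ _), hneg, hpos]
    simp only [F]
    rw [show 2 * -(π / 2) + θ = θ - π by ring, show 2 * (π / 2) + θ = θ + π by ring,
      show 2 * -θ + θ = -θ by ring, cos_sub_pi, cos_add_pi, cos_neg]
    ring
  have shift (t : ℝ) : ∫ φ in t..t + π, |cos φ * sin (φ + θ)| = θ * sin θ + cos θ := by
    rw [hper.intervalIntegral_add_eq t (-(π / 2)), ← half_period]
    ring_nf
  calc ∫ φ in -π..π, |cos φ * sin (φ + θ)|
      = (∫ φ in -π..-π + π, |cos φ * sin (φ + θ)|) + ∫ φ in 0..0 + π, |cos φ * sin (φ + θ)| := by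
        rw [neg_add_cancel, zero_add, intervalIntegral.integral_add_adjacent_intervals
          (hint _ _) (hint _ _)]
    _ = 2 * (θ * sin θ + cos θ) := by rw [shift, shift]; ring

/-- For `b₁, b₂` independent real standard Gaussians `N(0,1)` and every
`θ ∈ [0, π/2]`, `E[|b₁| ⬝ |b₁ sin θ + b₂ cos θ|] = (2/π) (θ sin θ + cos θ)`. -/
theorem real_gaussian_h_formula (θ : ℝ) (hθ : θ ∈ Set.Icc 0 (π / 2)) :
    (∫ b : ℝ × ℝ, |b.1| * |b.1 * Real.sin θ + b.2 * Real.cos θ|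
        ∂((gaussianReal 0 1).prod (gaussianReal 0 1))) =
      (2 / π) * (θ * Real.sin θ + Real.cos θ) := by
  have homogeneous (r : ℝ) (hr : 0 < r) (p : ℝ × ℝ) :
      |(r • p).1| * |(r • p).1 * sin θ + (r • p).2 * cos θ|
        = r ^ 2 * (|p.1| * |p.1 * sin θ + p.2 * cos θ|) := by
    simp only [Prod.smul_fst, Prod.smul_snd, smul_eq_mul]
    rw [show r * p.1 * sin θ + r * p.2 * cos θ = r * (p.1 * sin θ + p.2 * cos θ) by ring,
      abs_mul, abs_mul, abs_of_pos hr]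
    ring
  have on_circle (φ : ℝ) : |cos φ| * |cos φ * sin θ + sin φ * cos θ| = |cos φ * sin (φ + θ)| := by
    rw [abs_mul, sin_add, add_comm (sin φ * cos θ), mul_comm (cos φ) (sin θ)]
  rw [integral_gaussianReal_prod_eq_of_homogeneous homogeneous]
  simp only [on_circle]
  rw [integral_abs_cos_mul_sin_add hθ.1 hθ.2]
  ring
end
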